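/- Let ℓ₁, …, ℓ_K : ℝ^n → ℝ and L_main : ℝ^n → ℝ be twice continuously differentiable, and define the training loss L_T(W, φ) = L_main(W) + Σ_{j=1}^K φ_j·ℓ_j(W) for φ ∈ ℝ^K. Let L_A : ℝ^n → ℝ be differentiable. Suppose W* : ℝ^K → ℝ^n is differentiable at φ̂, the W-gradient of L_T vanishes at (W*(φ), φ) for all φ in a neighborhood of φ̂, and the Hessian H of W ↦ L_T(W, φ̂) at W*(φ̂) is invertible. Then for each j = 1, …, K, the partial derivative of φ ↦ L_A(W*(φ)) in the j-th coordinate at φ̂ equals −⟨∇L_A(W*(φ̂)), H⁻¹ ∇ℓ_j(W*(φ̂))⟩. -/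

import Mathlib

open scoped RealInnerProductSpace

open InnerProductSpace Filter Topology

/-! Differentiating the stationarity condition `∇L_main(W*(φ)) + ∑ᵢ φᵢ ∇ℓᵢ(W*(φ)) = 0` at `φ₀`
in the direction `eⱼ` gives `H (DW*(φ₀) eⱼ) + ∇ℓⱼ(W*(φ₀)) = 0`, the extra term coming from the
explicit dependence on `φⱼ`. Hence `DW*(φ₀) eⱼ = -H⁻¹ ∇ℓⱼ(W*(φ₀))`, and the chain rule for
`L_A ∘ W*` gives the formula. -/

section Gradient

variable {F : Type*} [NormedAddCommGroup F] [InnerProductSpace ℝ F] [CompleteSpace F]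
  {ι : Type*} [Fintype ι]

theorem gradient_add_sum_mul {f : F → ℝ} {g : ι → F → ℝ} {x : F}
    (hf : DifferentiableAt ℝ f x) (hg : ∀ i, DifferentiableAt ℝ (g i) x) (c : ι → ℝ) :
    gradient (fun W => f W + ∑ i, c i * g i W) x = gradient f x + ∑ i, c i • gradient (g i) x := by
  refine HasGradientAt.gradient ?_
  rw [hasGradientAt_iff_hasFDerivAt, map_add, map_sum]
  simp only [map_smul, toDual_gradient]
  exact hf.hasFDerivAt.add (HasFDerivAt.fun_sum fun i _ => (hg i).hasFDerivAt.const_mul (c i))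

theorem ContDiff.differentiable_gradient {f : F → ℝ} {n : WithTop ℕ∞} (hf : ContDiff ℝ n f)
    (hn : 2 ≤ n) : Differentiable ℝ (gradient f) :=
  (toDual ℝ F).symm.toContinuousLinearEquiv.differentiable.comp
    ((hf.fderiv_right (m := 1) hn).differentiable one_ne_zero)

end Gradient

section Implicit

variable {F : Type*} [NormedAddCommGroup F] [NormedSpace ℝ F]
  {ι : Type*} [Fintype ι]
  {w : EuclideanSpace ℝ ι → F} {w' : EuclideanSpace ℝ ι →L[ℝ] F} {p : EuclideanSpace ℝ ι}
  {g : F → F} {g' : F →L[ℝ] F} {b : ι → F → F} {b' : ι → F →L[ℝ] F}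

theorem HasFDerivAt.comp_add_sum_smul (hw : HasFDerivAt w w' p) (hg : HasFDerivAt g g' (w p))
    (hb : ∀ i, HasFDerivAt (b i) (b' i) (w p)) :
    HasFDerivAt (fun φ : EuclideanSpace ℝ ι => g (w φ) + ∑ i, φ i • b i (w φ))
      (g'.comp w' + ∑ i, (p i • (b' i).comp w' +
        (EuclideanSpace.proj i : EuclideanSpace ℝ ι →L[ℝ] ℝ).smulRight (b i (w p)))) p :=
  (hg.comp p hw).add <| HasFDerivAt.fun_sum fun i _ =>
    (EuclideanSpace.proj i : EuclideanSpace ℝ ι →L[ℝ] ℝ).hasFDerivAt.smul ((hb i).comp p hw)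

theorem HasFDerivAt.apply_single_of_eventually_add_sum_smul_eq_zero (hw : HasFDerivAt w w' p)
    (hg : HasFDerivAt g g' (w p)) (hb : ∀ i, HasFDerivAt (b i) (b' i) (w p))
    (hzero : ∀ᶠ φ in 𝓝 p, g (w φ) + ∑ i, φ i • b i (w φ) = 0) [DecidableEq ι] (j : ι) :
    (g' + ∑ i, p i • b' i) (w' (EuclideanSpace.single j 1)) = - b j (w p) := by
  have hD := (hw.comp_add_sum_smul hg hb).unique
    ((hasFDerivAt_const 0 p).congr_of_eventuallyEq hzero)
  have := congr($hD (EuclideanSpace.single j 1))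
  simp only [Finset.sum_add_distrib, add_apply, ContinuousLinearMap.comp_apply, sum_apply,
    smul_apply, ContinuousLinearMap.smulRight_apply, PiLp.proj_apply, PiLp.single_apply, ite_smul,
    one_smul, zero_smul, Finset.sum_ite_eq', Finset.mem_univ, ↓reduceIte, zero_apply] at this ⊢
  rw [← add_assoc] at this
  exact eq_neg_of_add_eq_zero_left this

end Implicit

/-- For the linearly combined training loss
`L_T(W, φ) = L_main(W) + Σ_j φ_j ℓ_j(W)` with stationary-point map `W*` and
invertible Hessian `H` of `W ↦ L_T(W, φ₀)` at `W*(φ₀)`, the `j`-th partial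
derivative of `φ ↦ L_A(W*(φ))` at `φ₀` equals
`−⟨∇L_A(W*(φ₀)), H⁻¹ ∇ℓ_j(W*(φ₀))⟩`. -/
theorem stmt_5 (n K : ℕ)
    (Lmain : EuclideanSpace ℝ (Fin n) → ℝ)
    (ℓ : Fin K → EuclideanSpace ℝ (Fin n) → ℝ)
    (LA : EuclideanSpace ℝ (Fin n) → ℝ)
    (hmain : ContDiff ℝ 2 Lmain) (hℓ : ∀ j, ContDiff ℝ 2 (ℓ j))
    (hLA : Differentiable ℝ LA)
    (Wstar : EuclideanSpace ℝ (Fin K) → EuclideanSpace ℝ (Fin n))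
    (phi0 : EuclideanSpace ℝ (Fin K))
    (hWdiff : DifferentiableAt ℝ Wstar phi0)
    (hstat : ∀ᶠ φ in nhds phi0,
      gradient (fun W => Lmain W + ∑ j, φ j * ℓ j W) (Wstar φ) = 0)
    (H : EuclideanSpace ℝ (Fin n) ≃L[ℝ] EuclideanSpace ℝ (Fin n))
    (hH : (H : EuclideanSpace ℝ (Fin n) →L[ℝ] EuclideanSpace ℝ (Fin n)) =
      fderiv ℝ (gradient (fun W => Lmain W + ∑ j, phi0 j * ℓ j W)) (Wstar phi0)) :
    ∀ j : Fin K,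
      fderiv ℝ (fun φ => LA (Wstar φ)) phi0 (EuclideanSpace.single j 1) =
        - ⟪gradient LA (Wstar phi0), H.symm (gradient (ℓ j) (Wstar phi0))⟫ := by
  intro j
  have hgrad (φ : EuclideanSpace ℝ (Fin K)) :
      gradient (fun W => Lmain W + ∑ i, φ i * ℓ i W) =
        fun W => gradient Lmain W + ∑ i, φ i • gradient (ℓ i) W :=
    funext fun W => gradient_add_sum_mul ((hmain.differentiable two_ne_zero) W)
      (fun i => (hℓ i).differentiable two_ne_zero W) φ
  have hDmain := ((hmain.differentiable_gradient le_rfl) (Wstar phi0)).hasFDerivAt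
  have hDℓ i := (((hℓ i).differentiable_gradient le_rfl) (Wstar phi0)).hasFDerivAt
  have hHsum : (H : EuclideanSpace ℝ (Fin n) →L[ℝ] EuclideanSpace ℝ (Fin n)) =
      fderiv ℝ (gradient Lmain) (Wstar phi0) +
        ∑ i, phi0 i • fderiv ℝ (gradient (ℓ i)) (Wstar phi0) := by
    rw [hH, hgrad]
    exact (hDmain.add (HasFDerivAt.fun_sum fun i _ => (hDℓ i).const_smul (phi0 i))).fderiv
  have hWstar_single : fderiv ℝ Wstar phi0 (EuclideanSpace.single j 1) =
      - H.symm (gradient (ℓ j) (Wstar phi0)) := by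
    have hstat' := hstat.mono fun φ hφ => by rwa [hgrad] at hφ
    have hH_single :=
      hWdiff.hasFDerivAt.apply_single_of_eventually_add_sum_smul_eq_zero hDmain hDℓ hstat' j
    rw [← hHsum, ContinuousLinearEquiv.coe_coe] at hH_single
    rw [← map_neg, ← hH_single, H.symm_apply_apply]
  rw [fderiv_fun_comp phi0 (hLA _) hWdiff, ContinuousLinearMap.comp_apply,
    hWstar_single, ← inner_gradient_left, inner_neg_right]
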